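/- For every real x and every integer m ≥ 1, ∑_{n=0}^{m} ((−1)ⁿ + (−1)^{m−n})·fₙ·h_{m−n} = 0; equivalently, the formal power series f(z) = ∑ fₙ zⁿ and h(z) = ∑ hₙ zⁿ satisfy f(z)·h(−z) + f(−z)·h(z) = 2. (This is the scalar form of the unitarity of Givental's fundamental solution, and expresses the cancellation of the singular part of V^{++}(z,w) at w = −z.) -/

import Mathlib

/-- `α₀ = 1` and, for `n ≥ 1`, `αₙ = ((-1)ⁿ/(8ⁿ·n!))·∏_{ℓ=1}^{n}(2ℓ-1)²`. -/
noncomputable def alph (n : ℕ) : ℝ :=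
  ((-1) ^ n / (8 ^ n * Nat.factorial n)) * ∏ ℓ ∈ Finset.range n, ((2 * (ℓ : ℝ) + 1)) ^ 2

/-- `f₀ = 1` and `fₙ = (−1)ⁿ·αₙ·xⁿ` (the formula also gives `f₀ = 1` at `n = 0`):
coefficient sequence of the component `S₀⁺` of Givental's fundamental solution. -/
noncomputable def fSeq (x : ℝ) (n : ℕ) : ℝ := (-1) ^ n * alph n * x ^ n

/-- `h₀ = 1` and `hₙ = −(−1)ⁿ·((2n+1)/(2n−1))·αₙ·xⁿ` (the formula also gives
`h₀ = 1` at `n = 0`): coefficient sequence of the component `S₁⁺` of Givental's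
fundamental solution. -/
noncomputable def hSeq (x : ℝ) (n : ℕ) : ℝ :=
  -((-1) ^ n * ((2 * (n : ℝ) + 1) / (2 * (n : ℝ) - 1)) * alph n * x ^ n)

/-!
With `S₀(z) = ∑ fₙ(1) zⁿ` and `S₁(z) = ∑ hₙ(1) zⁿ`, the two-term recursion of `αₙ` turns into the
first-order system `z² S₀' = S₀ - S₁ - z S₀ / 2`, `z² S₁' = S₁ - S₀ + z S₁ / 2`. For any solution
`(P, Q)` of this system the series `W(z) = P(z) Q(-z) + P(-z) Q(z)` satisfies `z² W' = 0`, so `W` is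
the constant `W(0) = 2`. The sum in the theorem is `xᵐ` times the `m`-th coefficient of `W`.
-/

open Finset PowerSeries

theorem coeff_succ_X_sq_mul_derivative {R : Type*} [CommSemiring R] (A : R⟦X⟧) (n : ℕ) :
    coeff (n + 1) (X ^ 2 * d⁄dX R A) = n * coeff n A := by
  rw [pow_two, mul_assoc, coeff_succ_X_mul]
  rcases n with _ | n
  · simp
  · simp [coeff_succ_X_mul, coeff_derivative, mul_comm]

section Wronskian

variable {R : Type*} [CommRing R]

theorem derivative_evalNegHom (A : R⟦X⟧) :
    d⁄dX R (evalNegHom A) = -evalNegHom (d⁄dX R A) := by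
  ext n
  simp only [evalNegHom, coeff_derivative, coeff_rescale, map_neg, pow_succ]
  ring

theorem evalNegHom_C (c : R) : evalNegHom (C c) = C c := by
  ext n
  rcases n with _ | n <;> simp [evalNegHom, coeff_C]

theorem coeff_mul_evalNegHom_add_evalNegHom_mul (P Q : R⟦X⟧) (m : ℕ) :
    coeff m (P * evalNegHom Q + evalNegHom P * Q) =
      ∑ n ∈ range (m + 1), ((-1) ^ n + (-1) ^ (m - n)) * coeff n P * coeff (m - n) Q := by
  simp only [map_add, coeff_mul, evalNegHom, coeff_rescale, ← sum_add_distrib,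
    Nat.sum_antidiagonal_eq_sum_range_succ_mk]
  exact sum_congr rfl fun n _ => by ring

theorem X_sq_mul_derivative_wronskian {P Q : R⟦X⟧} {c : R}
    (hP : X ^ 2 * d⁄dX R P = P - Q - C c * X * P)
    (hQ : X ^ 2 * d⁄dX R Q = Q - P + C c * X * Q) :
    X ^ 2 * d⁄dX R (P * evalNegHom Q + evalNegHom P * Q) = 0 := by
  have hX : evalNegHom (X ^ 2 : R⟦X⟧) = X ^ 2 := by simp
  have hP' : X ^ 2 * evalNegHom (d⁄dX R P) =
      evalNegHom P - evalNegHom Q + C c * X * evalNegHom P := by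
    simpa [hX, evalNegHom_C, sub_eq_add_neg] using congrArg evalNegHom hP
  have hQ' : X ^ 2 * evalNegHom (d⁄dX R Q) =
      evalNegHom Q - evalNegHom P - C c * X * evalNegHom Q := by
    simpa [hX, evalNegHom_C, sub_eq_add_neg] using congrArg evalNegHom hQ
  simp only [map_add, Derivation.leibniz, derivative_evalNegHom, smul_eq_mul]
  linear_combination evalNegHom Q * hP - P * hQ' - Q * hP' + evalNegHom P * hQ

theorem mul_evalNegHom_add_evalNegHom_mul_eq_C [IsAddTorsionFree R] {P Q : R⟦X⟧} {c : R}
    (hP : X ^ 2 * d⁄dX R P = P - Q - C c * X * P)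
    (hQ : X ^ 2 * d⁄dX R Q = Q - P + C c * X * Q) :
    P * evalNegHom Q + evalNegHom P * Q = C (2 * coeff 0 P * coeff 0 Q) := by
  refine derivative.ext ?_ ?_
  · rw [derivative_C]
    exact X_pow_mul_injective (by simpa using X_sq_mul_derivative_wronskian hP hQ)
  · simp only [← coeff_zero_eq_constantCoeff_apply, coeff_mul_evalNegHom_add_evalNegHom_mul, coeff_C,
      zero_add, range_one, sum_singleton, pow_zero, Nat.sub_self, if_true]
    ring

end Wronskian

noncomputable def S₀ : ℝ⟦X⟧ := mk (fSeq 1)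

noncomputable def S₁ : ℝ⟦X⟧ := mk (hSeq 1)

theorem coeff_zero_S₀ : coeff 0 S₀ = 1 := by
  simp [S₀, fSeq, alph]

theorem coeff_zero_S₁ : coeff 0 S₁ = 1 := by
  simp [S₁, hSeq, alph]

theorem fSeq_eq (x : ℝ) (n : ℕ) : fSeq x n = coeff n S₀ * x ^ n := by
  simp [S₀, fSeq]

theorem hSeq_eq (x : ℝ) (n : ℕ) : hSeq x n = coeff n S₁ * x ^ n := by
  simp [S₁, hSeq]

theorem fSeq_one_succ (n : ℕ) :
    fSeq 1 (n + 1) = fSeq 1 n * (2 * n + 1) ^ 2 / (8 * (n + 1)) := by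
  simp only [fSeq, alph, prod_range_succ, pow_succ, Nat.factorial_succ, Nat.cast_mul, one_pow,
    mul_one, Nat.cast_succ]
  field_simp

theorem hSeq_one (n : ℕ) : hSeq 1 n = -((2 * n + 1) / (2 * n - 1)) * fSeq 1 n := by
  simp only [hSeq, fSeq]
  ring

theorem two_mul_sub_one_mul_hSeq_one (n : ℕ) :
    (2 * n - 1) * hSeq 1 n = -((2 * n + 1) * fSeq 1 n) := by
  have h : (2 * n : ℝ) - 1 ≠ 0 := sub_ne_zero.mpr (by exact_mod_cast (by omega : 2 * n ≠ 1))
  rw [hSeq_one]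
  field_simp

theorem fSeq_one_succ_sub_hSeq_one_succ (n : ℕ) :
    fSeq 1 (n + 1) - hSeq 1 (n + 1) = (2 * n + 1) / 2 * fSeq 1 n := by
  have : (2 * n + 1 : ℝ) ≠ 0 := by positivity
  have : (n + 1 : ℝ) ≠ 0 := by positivity
  rw [hSeq_one, fSeq_one_succ]
  push_cast
  rw [show 2 * ((n : ℝ) + 1) - 1 = 2 * n + 1 by ring]
  field_simp
  ring

theorem X_sq_mul_derivative_S₀ : X ^ 2 * d⁄dX ℝ S₀ = S₀ - S₁ - C (1 / 2) * X * S₀ := by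
  ext (_ | n)
  · rw [map_sub, map_sub, coeff_zero_S₀, coeff_zero_S₁]
    simp
  · simp only [coeff_succ_X_sq_mul_derivative, map_sub, mul_assoc, coeff_C_mul, coeff_succ_X_mul,
      S₀, S₁, coeff_mk]
    linear_combination -fSeq_one_succ_sub_hSeq_one_succ n

theorem X_sq_mul_derivative_S₁ : X ^ 2 * d⁄dX ℝ S₁ = S₁ - S₀ + C (1 / 2) * X * S₁ := by
  ext (_ | n)
  · rw [map_add, map_sub, coeff_zero_S₀, coeff_zero_S₁]
    simp
  · simp only [coeff_succ_X_sq_mul_derivative, map_sub, map_add, mul_assoc, coeff_C_mul,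
      coeff_succ_X_mul, S₀, S₁, coeff_mk]
    linear_combination fSeq_one_succ_sub_hSeq_one_succ n + two_mul_sub_one_mul_hSeq_one n / 2

theorem S₀_mul_evalNegHom_S₁_add : S₀ * evalNegHom S₁ + evalNegHom S₀ * S₁ = 2 := by
  rw [mul_evalNegHom_add_evalNegHom_mul_eq_C X_sq_mul_derivative_S₀ X_sq_mul_derivative_S₁,
    coeff_zero_S₀, coeff_zero_S₁, mul_one, mul_one, map_ofNat]

/-- Scalar form of the unitarity of Givental's fundamental solution
(`f(z)·h(−z) + f(−z)·h(z) = 2`): for every real `x` and every `m ≥ 1`,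
`∑_{n=0}^{m} ((−1)ⁿ + (−1)^{m−n})·fₙ·h_{m−n} = 0`. -/
theorem stmt12 (x : ℝ) (m : ℕ) (hm : 1 ≤ m) :
    ∑ n ∈ Finset.range (m + 1),
      (((-1 : ℝ) ^ n + (-1 : ℝ) ^ (m - n)) * fSeq x n * hSeq x (m - n)) = 0 := by
  calc _ = x ^ m * coeff m (S₀ * evalNegHom S₁ + evalNegHom S₀ * S₁) := by
        rw [coeff_mul_evalNegHom_add_evalNegHom_mul, mul_sum]
        refine sum_congr rfl fun n hn => ?_
        rw [fSeq_eq, hSeq_eq, ← pow_mul_pow_sub x (mem_range_succ_iff.mp hn)]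
        ring
    _ = 0 := by
        rw [S₀_mul_evalNegHom_S₁_add, ← map_ofNat C 2, coeff_C, if_neg (by omega), mul_zero]
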